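/- arXiv:2410.23937 — 8 statements merged into one kernel-verified Lean document; each statement's English description precedes it below -/
import Mathlib

section
/- For the Huber function h with threshold 2 and any a, u ∈ ℝ, one has h(a + u) − h(a) − φ(a)·u ≥ (1/2)·u²·1[|a| ≤ 1]·1[|u| ≤ 1], where φ is the derivative of h. -/
/-- The Huber loss function with threshold 2. -/
noncomputable def huber (x : ℝ) : ℝ := if |x| ≤ 2 then x ^ 2 / 2 else 2 * |x| - 2

/-- The derivative of the Huber loss function. -/
noncomputable def huberDeriv (x : ℝ) : ℝ := if x < -2 then -2 else if x ≤ 2 then x else 2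

set_option maxHeartbeats 1000000 in
lemma huber_bregman_nonneg (a u : ℝ) :
    huber (a + u) - huber a - huberDeriv a * u ≥ 0 := by
  unfold huber huberDeriv
  rcases abs_cases (a + u) with ⟨h1, h2⟩ | ⟨h1, h2⟩ <;>
  rcases abs_cases a with ⟨h3, h4⟩ | ⟨h3, h4⟩ <;>
  rw [h1, h3] <;> split_ifs <;>
  nlinarith [sq_nonneg u, sq_nonneg (a + u - 2), sq_nonneg (a + u + 2),
    sq_nonneg (a - 2), sq_nonneg (a + 2)]

/-- Second-order strong convexity of the Huber loss: for any `a u : ℝ`,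
`h(a+u) − h(a) − φ(a)·u ≥ (1/2)·u²·1[|a| ≤ 1]·1[|u| ≤ 1]`. -/
theorem huber_strong_convexity (a u : ℝ) :
    huber (a + u) - huber a - huberDeriv a * u ≥
      (1 / 2) * u ^ 2 * (if |a| ≤ 1 then (1 : ℝ) else 0) * (if |u| ≤ 1 then (1 : ℝ) else 0) := by
  by_cases ha : |a| ≤ 1
  · by_cases hu : |u| ≤ 1
    · simp only [ha, hu, if_pos]
      have h1 : |a + u| ≤ 2 := by
        calc |a + u| ≤ |a| + |u| := abs_add_le a u
        _ ≤ 2 := by linarith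
      have h2 : -2 ≤ a ∧ a ≤ 2 := abs_le.mp (le_trans ha one_le_two)
      unfold huber huberDeriv
      rw [if_pos h1, if_pos (le_trans ha one_le_two),
        if_neg (by linarith [h2.1]), if_pos h2.2]
      nlinarith [sq_nonneg u]
    · simpa [ha, hu] using huber_bregman_nonneg a u
  · simpa [ha] using huber_bregman_nonneg a u
end

section
/- Let Σ be positive definite, X ∈ ℝ^{m×d}, r > 0, δ ∈ (0,1), and suppose that for all k''-sparse u' with r ≤ ‖Σ^{1/2}u'‖ ≤ 2r one has (1−δ)‖Σ^{1/2}u'‖ ≤ ‖Xu'‖/√m ≤ (1+δ)‖Σ^{1/2}u'‖. If k'' ≥ 4 k' ‖Σ‖ / δ², then for all u with ‖Σ^{1/2}u‖ = r and ‖u‖₁ ≤ r√k', one has (1−4δ) r ≤ ‖Xu‖/√m ≤ (1+4δ) r. -/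
open Matrix Finset

/-- Euclidean norm of a vector. -/
noncomputable def enorm2 {m : ℕ} (v : Fin m → ℝ) : ℝ := Real.sqrt (∑ i, v i ^ 2)

/-- ℓ¹ norm of a vector. -/
noncomputable def l1norm {d : ℕ} (v : Fin d → ℝ) : ℝ := ∑ i, |v i|

/-- `‖Σ^{1/2} u‖ = √(uᵀ Σ u)` for a positive (semi)definite matrix `Σ`. -/
noncomputable def sqrtForm {d : ℕ} (A : Matrix (Fin d) (Fin d) ℝ) (u : Fin d → ℝ) : ℝ :=
  Real.sqrt (u ⬝ᵥ A.mulVec u)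

/-- A vector is `k`-sparse if it has at most `k` nonzero coordinates. -/
def IsSparse {d : ℕ} (k : ℕ) (v : Fin d → ℝ) : Prop := Set.ncard {i | v i ≠ 0} ≤ k


lemma enorm2_eq_norm {m : ℕ} (v : Fin m → ℝ) :
    enorm2 v = ‖(WithLp.equiv 2 (Fin m → ℝ)).symm v‖ := by
  rw [EuclideanSpace.norm_eq]
  simp [enorm2, sq_abs]

lemma enorm2_nonneg {m : ℕ} (v : Fin m → ℝ) : 0 ≤ enorm2 v := Real.sqrt_nonneg _

lemma enorm2_add_le {m : ℕ} (v w : Fin m → ℝ) : enorm2 (v + w) ≤ enorm2 v + enorm2 w := by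
  simp only [enorm2_eq_norm]
  rw [show (WithLp.equiv 2 (Fin m → ℝ)).symm (v + w)
    = (WithLp.equiv 2 (Fin m → ℝ)).symm v + (WithLp.equiv 2 (Fin m → ℝ)).symm w from rfl]
  exact norm_add_le _ _

lemma enorm2_smul {m : ℕ} (c : ℝ) (v : Fin m → ℝ) : enorm2 (c • v) = |c| * enorm2 v := by
  simp only [enorm2_eq_norm]
  rw [show (WithLp.equiv 2 (Fin m → ℝ)).symm (c • v)
    = c • (WithLp.equiv 2 (Fin m → ℝ)).symm v from rfl]
  rw [norm_smul]; simp [Real.norm_eq_abs]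

lemma abs_enorm2_sub {m : ℕ} (v w : Fin m → ℝ) :
    |enorm2 v - enorm2 w| ≤ enorm2 (v - w) := by
  simp only [enorm2_eq_norm]
  rw [show (WithLp.equiv 2 (Fin m → ℝ)).symm (v - w)
    = (WithLp.equiv 2 (Fin m → ℝ)).symm v - (WithLp.equiv 2 (Fin m → ℝ)).symm w from rfl]
  exact abs_norm_sub_norm_le _ _


open scoped MatrixOrder Matrix.Norms.L2Operator in
lemma Matrix.PosSemidef.exists_sqrt {d : ℕ} {A : Matrix (Fin d) (Fin d) ℝ} (hA : A.PosSemidef) :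
    ∃ B : Matrix (Fin d) (Fin d) ℝ, A = star B * B :=
  CStarAlgebra.nonneg_iff_eq_star_mul_self.mp hA.nonneg

noncomputable def Matrix.PosSemidef.sqrt {d : ℕ} {A : Matrix (Fin d) (Fin d) ℝ}
    (hA : A.PosSemidef) : Matrix (Fin d) (Fin d) ℝ := Classical.choose hA.exists_sqrt

lemma sqrtForm_eq_enorm2 {d : ℕ} {A : Matrix (Fin d) (Fin d) ℝ} (hA : A.PosSemidef)
    (u : Fin d → ℝ) : sqrtForm A u = enorm2 (hA.sqrt.mulVec u) := by
  have hspec : A = hA.sqrtᵀ * hA.sqrt := by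
    simpa [Matrix.PosSemidef.sqrt, star_eq_conjTranspose] using
      Classical.choose_spec hA.exists_sqrt
  have : u ⬝ᵥ A.mulVec u = (hA.sqrt.mulVec u) ⬝ᵥ (hA.sqrt.mulVec u) := by
    conv_lhs => rw [hspec]
    rw [← mulVec_mulVec, dotProduct_mulVec, vecMul_transpose]
  rw [sqrtForm, this, enorm2]
  congr 1
  simp [dotProduct, sq]


lemma sqrtForm_nonneg {d : ℕ} (A : Matrix (Fin d) (Fin d) ℝ) (u : Fin d → ℝ) :
    0 ≤ sqrtForm A u := Real.sqrt_nonneg _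


lemma sqrtForm_smul {d : ℕ} {A : Matrix (Fin d) (Fin d) ℝ} (hA : A.PosSemidef)
    (c : ℝ) (u : Fin d → ℝ) : sqrtForm A (c • u) = |c| * sqrtForm A u := by
  rw [sqrtForm_eq_enorm2 hA, sqrtForm_eq_enorm2 hA, mulVec_smul, enorm2_smul]

lemma sqrtForm_pos {d : ℕ} {A : Matrix (Fin d) (Fin d) ℝ} (hA : A.PosDef)
    {u : Fin d → ℝ} (hu : u ≠ 0) : 0 < sqrtForm A u :=
  Real.sqrt_pos.2 (by simpa using hA.dotProduct_mulVec_pos hu)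

lemma isSparse_smul {d : ℕ} {k : ℕ} {v : Fin d → ℝ} (c : ℝ) (h : IsSparse k v) :
    IsSparse k (c • v) := by
  refine le_trans (Set.ncard_le_ncard ?_ (Set.toFinite _)) h
  intro i hi
  simp only [Set.mem_setOf_eq, Pi.smul_apply, smul_eq_mul] at hi ⊢
  exact fun h0 => hi (by rw [h0, mul_zero])

theorem scaledRIP {d m : ℕ} (Sig : Matrix (Fin d) (Fin d) ℝ)
    (hSig : Sig.PosDef) (X : Matrix (Fin m) (Fin d) ℝ) (r δ : ℝ) (k'' : ℕ)
    (hr : 0 < r) (hδ : δ ∈ Set.Ioo (0 : ℝ) 1)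
    (hRIP : ∀ u' : Fin d → ℝ, IsSparse k'' u' → r ≤ sqrtForm Sig u' →
      sqrtForm Sig u' ≤ 2 * r →
      (1 - δ) * sqrtForm Sig u' ≤ enorm2 (X.mulVec u') / Real.sqrt m ∧
        enorm2 (X.mulVec u') / Real.sqrt m ≤ (1 + δ) * sqrtForm Sig u')
    (w : Fin d → ℝ) (hw : IsSparse k'' w) :
      (1 - δ) * sqrtForm Sig w ≤ enorm2 (X.mulVec w) / Real.sqrt m ∧
        enorm2 (X.mulVec w) / Real.sqrt m ≤ (1 + δ) * sqrtForm Sig w := by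
  rcases eq_or_ne w 0 with rfl | hw0
  · simp [sqrtForm, enorm2]
  · have hs : 0 < sqrtForm Sig w := sqrtForm_pos hSig hw0
    set c : ℝ := r / sqrtForm Sig w with hc
    have hcpos : 0 < c := div_pos hr hs
    have hsf : sqrtForm Sig (c • w) = r := by
      rw [sqrtForm_smul hSig.posSemidef, abs_of_pos hcpos, hc, div_mul_cancel₀ _ hs.ne']
    have hen : enorm2 (X.mulVec (c • w)) = c * enorm2 (X.mulVec w) := by
      rw [mulVec_smul, enorm2_smul, abs_of_pos hcpos]
    obtain ⟨h1, h2⟩ := hRIP (c • w) (isSparse_smul c hw) (by rw [hsf])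
      (by rw [hsf]; linarith)
    rw [hsf, hen] at h1 h2
    rw [mul_div_assoc] at h1 h2
    have hr' : c * sqrtForm Sig w = r := div_mul_cancel₀ _ hs.ne'
    constructor
    · refine (mul_le_mul_iff_right₀ hcpos).mp ?_
      calc c * ((1 - δ) * sqrtForm Sig w) = (1 - δ) * (c * sqrtForm Sig w) := by ring
        _ = (1 - δ) * r := by rw [hr']
        _ ≤ _ := h1
    · refine (mul_le_mul_iff_right₀ hcpos).mp ?_
      calc c * (enorm2 (X.mulVec w) / Real.sqrt m) ≤ (1 + δ) * r := h2
        _ = (1 + δ) * (c * sqrtForm Sig w) := by rw [hr']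
        _ = c * ((1 + δ) * sqrtForm Sig w) := by ring


lemma l1norm_nonneg {d : ℕ} (v : Fin d → ℝ) : 0 ≤ l1norm v :=
  Finset.sum_nonneg fun _ _ => abs_nonneg _

lemma sqrt_mul_le_half_add {a b : ℝ} (ha : 0 ≤ a) (hb : 0 ≤ b) :
    Real.sqrt (a * b) ≤ (a + b) / 2 := by
  rw [Real.sqrt_mul ha]
  nlinarith [sq_nonneg (Real.sqrt a - Real.sqrt b), Real.sq_sqrt ha, Real.sq_sqrt hb,
    Real.sqrt_nonneg a, Real.sqrt_nonneg b]

lemma shelling {d n : ℕ} (u : Fin d → ℝ) (hn : 0 < n) (hd : 0 < d) :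
    ∃ w : ℕ → Fin d → ℝ,
      (∀ j, IsSparse n (w j)) ∧
      (u = w 0 + ∑ j ∈ Finset.range (d-1), w (j+1)) ∧
      (∑ j ∈ Finset.range (d-1), enorm2 (w (j+1)) ≤ l1norm u / Real.sqrt n) := by
  classical
  set σ : Equiv.Perm (Fin d) := Tuple.sort (fun i => -|u i|) with hσ
  have hanti : ∀ s t : Fin d, s ≤ t → |u (σ t)| ≤ |u (σ s)| := by
    intro s t hst
    have := Tuple.monotone_sort (fun i => -|u i|) hst
    simpa using this
  set w : ℕ → Fin d → ℝ := fun j i => if ((σ.symm i : ℕ) / n = j) then u i else 0 with hw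
  -- total sum
  have hsum : ∀ i, ∑ j ∈ Finset.range d, w j i = u i := by
    intro i
    have hlt : (σ.symm i : ℕ) / n ∈ Finset.range d :=
      Finset.mem_range.2 (lt_of_le_of_lt (Nat.div_le_self _ _) (σ.symm i).isLt)
    rw [hw]
    simp only
    rw [Finset.sum_ite_eq (Finset.range d) _ (fun _ => u i), if_pos hlt]
  -- sparsity
  have hsp : ∀ j, IsSparse n (w j) := by
    intro j
    have hsub : {i | w j i ≠ 0} ⊆ {i : Fin d | (σ.symm i : ℕ) / n = j} := by
      intro i hi
      simp only [hw, Set.mem_setOf_eq] at hi ⊢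
      by_contra hne
      exact hi (if_neg hne)
    refine le_trans (Set.ncard_le_ncard hsub (Set.toFinite _)) ?_
    have : {i : Fin d | (σ.symm i : ℕ) / n = j}.ncard ≤
        ((Finset.Ico (n*j) (n*j+n) : Finset ℕ) : Set ℕ).ncard := by
      apply Set.ncard_le_ncard_of_injOn (fun i => (σ.symm i : ℕ))
      · intro i hi
        simp only [Set.mem_setOf_eq] at hi
        simp only [Finset.coe_Ico, Set.mem_Ico]
        constructor
        · rw [← hi, mul_comm]; exact Nat.div_mul_le_self _ _
        · have h2 : (σ.symm i : ℕ) < (j+1) * n :=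
            (Nat.div_lt_iff_lt_mul hn).mp (by omega)
          have h3 : (j+1) * n = n*j + n := by ring
          omega
      · intro a _ b _ hab
        exact σ.symm.injective (Fin.val_injective hab)
    rw [Set.ncard_coe_finset, Nat.card_Ico] at this
    omega
  -- l1 additivity
  have hl1 : ∑ j ∈ Finset.range d, l1norm (w j) = l1norm u := by
    rw [l1norm]
    simp only [l1norm]
    rw [Finset.sum_comm]
    refine Finset.sum_congr rfl fun i _ => ?_
    have hlt : (σ.symm i : ℕ) / n ∈ Finset.range d :=
      Finset.mem_range.2 (lt_of_le_of_lt (Nat.div_le_self _ _) (σ.symm i).isLt)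
    simp only [hw]
    rw [Finset.sum_congr rfl (fun j _ => apply_ite abs _ (u i) 0)]
    simp only [abs_zero]
    rw [Finset.sum_ite_eq (Finset.range d) _ (fun _ => |u i|), if_pos hlt]
  have hd' : d - 1 + 1 = d := Nat.succ_pred_eq_of_pos hd
  have hn0 : (0:ℝ) < Real.sqrt n := Real.sqrt_pos.2 (by exact_mod_cast hn)
  -- per-entry bound
  have hentry : ∀ (j : ℕ) (i : Fin d), (σ.symm i : ℕ) / n = j + 1 →
      (n:ℝ) * |u i| ≤ l1norm (w j) := by
    intro j i hq
    have hq1 : (j+1) * n ≤ (σ.symm i : ℕ) := by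
      have := Nat.div_mul_le_self (σ.symm i : ℕ) n
      rwa [hq] at this
    have hqd : (σ.symm i : ℕ) < d := (σ.symm i).isLt
    have heq : n*j + n = (j+1) * n := by ring
    have hlt : ∀ t ∈ Finset.Ico (n*j) (n*j+n), t < d := by
      intro t ht
      rw [Finset.mem_Ico] at ht
      omega
    set F' : Finset (Fin d) := (Finset.Ico (n*j) (n*j+n)).attachFin hlt with hF'
    have hmem : ∀ s ∈ F', (s : Fin d) ∈ F' → True := fun _ _ _ => trivial
    have hws : ∀ s : Fin d, s ∈ F' → w j (σ s) = u (σ s) := by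
      intro s hs
      rw [Finset.mem_attachFin, Finset.mem_Ico] at hs
      have : ((σ.symm (σ s) : Fin d) : ℕ) / n = j := by
        rw [Equiv.symm_apply_apply]
        exact Nat.div_eq_of_lt_le (by rw [mul_comm]; exact hs.1) (heq ▸ hs.2)
      exact if_pos this
    have hle : ∀ s : Fin d, s ∈ F' → |u i| ≤ |u (σ s)| := by
      intro s hs
      rw [Finset.mem_attachFin, Finset.mem_Ico] at hs
      have hsq : s ≤ σ.symm i := by
        rw [Fin.le_def]
        exact le_of_lt (lt_of_lt_of_le (heq ▸ hs.2) hq1)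
      have := hanti s (σ.symm i) hsq
      rwa [Equiv.apply_symm_apply] at this
    calc (n:ℝ) * |u i| = ∑ _s ∈ F', |u i| := by
          rw [Finset.sum_const, Finset.card_attachFin, Nat.card_Ico]
          simp [nsmul_eq_mul]
      _ ≤ ∑ s ∈ F', |w j (σ s)| := by
          refine Finset.sum_le_sum fun s hs => ?_
          rw [hws s hs]; exact hle s hs
      _ = ∑ t ∈ F'.image σ, |w j t| := by
          rw [Finset.sum_image (fun a _ b _ h => σ.injective h)]
      _ ≤ ∑ t, |w j t| :=
          Finset.sum_le_sum_of_subset_of_nonneg (Finset.subset_univ _)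
            (fun t _ _ => abs_nonneg _)
      _ = l1norm (w j) := rfl
  -- block ℓ² bound
  have hblock : ∀ j : ℕ, enorm2 (w (j+1)) ≤
      (l1norm (w j) + l1norm (w (j+1))) / (2 * Real.sqrt n) := by
    intro j
    have hsq : (∑ i, w (j+1) i ^ 2) ≤ l1norm (w (j+1)) * (l1norm (w j) / n) := by
      rw [l1norm, Finset.sum_mul]
      refine Finset.sum_le_sum fun i _ => ?_
      by_cases hc : (σ.symm i : ℕ) / n = j + 1
      · have h1 : w (j+1) i = u i := if_pos hc
        have h2 := hentry j i hc
        have h3 : |u i| ≤ l1norm (w j) / n := by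
          rw [le_div_iff₀ (by exact_mod_cast hn)]
          linarith [h2]
        rw [h1]
        calc u i ^ 2 = |u i| * |u i| := by rw [sq]; exact (abs_mul_abs_self _).symm
          _ ≤ |u i| * (l1norm (w j) / n) := mul_le_mul_of_nonneg_left h3 (abs_nonneg _)
      · have h1 : w (j+1) i = 0 := if_neg hc
        simp [h1]
    calc enorm2 (w (j+1)) ≤ Real.sqrt (l1norm (w (j+1)) * l1norm (w j) / n) := by
          rw [enorm2]
          apply Real.sqrt_le_sqrt
          rw [mul_div_assoc]
          exact hsq
      _ = Real.sqrt (l1norm (w (j+1)) * l1norm (w j)) / Real.sqrt n :=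
          Real.sqrt_div (mul_nonneg (l1norm_nonneg _) (l1norm_nonneg _)) _
      _ ≤ ((l1norm (w (j+1)) + l1norm (w j)) / 2) / Real.sqrt n := by
          gcongr
          exact sqrt_mul_le_half_add (l1norm_nonneg _) (l1norm_nonneg _)
      _ = (l1norm (w j) + l1norm (w (j+1))) / (2 * Real.sqrt n) := by ring
  -- partial l1 sums
  have hA : ∑ j ∈ Finset.range (d-1), l1norm (w j) ≤ l1norm u := by
    rw [← hl1]
    exact Finset.sum_le_sum_of_subset_of_nonneg
      (Finset.range_subset_range.2 (Nat.sub_le d 1)) (fun j _ _ => l1norm_nonneg _)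
  have hB : ∑ j ∈ Finset.range (d-1), l1norm (w (j+1)) ≤ l1norm u := by
    have := Finset.sum_range_succ' (fun j => l1norm (w j)) (d-1)
    rw [hd'] at this
    rw [hl1] at this
    have h0 := l1norm_nonneg (w 0)
    linarith [this]
  refine ⟨w, hsp, ?_, ?_⟩
  · funext i
    rw [Pi.add_apply, Finset.sum_apply]
    have := Finset.sum_range_succ' (fun j => w j i) (d-1)
    rw [hd'] at this
    rw [hsum i] at this
    linarith [this]
  · calc ∑ j ∈ Finset.range (d-1), enorm2 (w (j+1))
        ≤ ∑ j ∈ Finset.range (d-1), (l1norm (w j) + l1norm (w (j+1))) / (2 * Real.sqrt n) :=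
          Finset.sum_le_sum fun j _ => hblock j
      _ = ((∑ j ∈ Finset.range (d-1), l1norm (w j)) +
            ∑ j ∈ Finset.range (d-1), l1norm (w (j+1))) / (2 * Real.sqrt n) := by
          rw [← Finset.sum_add_distrib, Finset.sum_div]
      _ ≤ (l1norm u + l1norm u) / (2 * Real.sqrt n) := by
          gcongr
      _ = l1norm u / Real.sqrt n := by
          field_simp
          ring


lemma enorm2_sum_le {m : ℕ} {α : Type*} (s : Finset α) (v : α → Fin m → ℝ) :
    enorm2 (∑ j ∈ s, v j) ≤ ∑ j ∈ s, enorm2 (v j) := by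
  classical
  induction s using Finset.cons_induction with
  | empty => simp [enorm2]
  | cons a s ha ih =>
      rw [Finset.sum_cons, Finset.sum_cons]
      exact le_trans (enorm2_add_le _ _) (by linarith)

lemma abs_sqrtForm_sub {d : ℕ} {A : Matrix (Fin d) (Fin d) ℝ} (hA : A.PosSemidef)
    (a b : Fin d → ℝ) : |sqrtForm A a - sqrtForm A b| ≤ sqrtForm A (a - b) := by
  rw [sqrtForm_eq_enorm2 hA, sqrtForm_eq_enorm2 hA, sqrtForm_eq_enorm2 hA,
    Matrix.mulVec_sub]
  exact abs_enorm2_sub _ _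

lemma sqrtForm_sum_le {d : ℕ} {A : Matrix (Fin d) (Fin d) ℝ} (hA : A.PosSemidef)
    {α : Type*} (s : Finset α) (v : α → Fin d → ℝ) :
    sqrtForm A (∑ j ∈ s, v j) ≤ ∑ j ∈ s, sqrtForm A (v j) := by
  simp only [sqrtForm_eq_enorm2 hA]
  have : hA.sqrt.mulVec (∑ j ∈ s, v j) = ∑ j ∈ s, hA.sqrt.mulVec (v j) := by
    simp only [← Matrix.mulVecLin_apply, map_sum]
  rw [this]
  exact enorm2_sum_le _ _

lemma sqrtForm_le_sqrt_mul {d : ℕ} {A : Matrix (Fin d) (Fin d) ℝ} {S : ℝ} (hS0 : 0 ≤ S)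
    (hS : ∀ v : Fin d → ℝ, v ⬝ᵥ A.mulVec v ≤ S * ∑ i, v i ^ 2) (v : Fin d → ℝ) :
    sqrtForm A v ≤ Real.sqrt S * enorm2 v := by
  rw [sqrtForm, enorm2, ← Real.sqrt_mul hS0]
  exact Real.sqrt_le_sqrt (hS v)

lemma l1norm_eq_zero_imp {d : ℕ} {v : Fin d → ℝ} (h : l1norm v ≤ 0) : v = 0 := by
  funext i
  have h2 : ∀ j ∈ Finset.univ, |v j| = 0 := by
    rw [← Finset.sum_eq_zero_iff_of_nonneg (fun j _ => abs_nonneg (v j))]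
    exact le_antisymm h (l1norm_nonneg v)
  simpa using abs_eq_zero.mp (h2 i (Finset.mem_univ i))

/-- Transfer of restricted isometry from `k''`-sparse vectors to the elastic ellipsoid:
if `(1−δ)‖Σ^{1/2}u'‖ ≤ ‖Xu'‖/√m ≤ (1+δ)‖Σ^{1/2}u'‖` for all `k''`-sparse `u'` with
`r ≤ ‖Σ^{1/2}u'‖ ≤ 2r`, and `k'' ≥ 4 k' ‖Σ‖/δ²` (with `S` an upper bound on `‖Σ‖`),
then `(1−4δ)r ≤ ‖Xu‖/√m ≤ (1+4δ)r` for all `u` with `‖Σ^{1/2}u‖ = r`, `‖u‖₁ ≤ r√k'`. -/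
theorem elastic_restricted_isometry {d m : ℕ} (Sig : Matrix (Fin d) (Fin d) ℝ)
    (hSig : Sig.PosDef) (X : Matrix (Fin m) (Fin d) ℝ) (S r δ : ℝ) (k' k'' : ℕ)
    (hm : 0 < m) (hr : 0 < r) (hδ : δ ∈ Set.Ioo (0 : ℝ) 1)
    (hS : ∀ v : Fin d → ℝ, v ⬝ᵥ Sig.mulVec v ≤ S * ∑ i, v i ^ 2)
    (hk : 4 * (k' : ℝ) * S / δ ^ 2 ≤ (k'' : ℝ))
    (hRIP : ∀ u' : Fin d → ℝ, IsSparse k'' u' → r ≤ sqrtForm Sig u' →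
      sqrtForm Sig u' ≤ 2 * r →
      (1 - δ) * sqrtForm Sig u' ≤ enorm2 (X.mulVec u') / Real.sqrt m ∧
        enorm2 (X.mulVec u') / Real.sqrt m ≤ (1 + δ) * sqrtForm Sig u') :
    ∀ u : Fin d → ℝ, sqrtForm Sig u = r → l1norm u ≤ r * Real.sqrt k' →
      (1 - 4 * δ) * r ≤ enorm2 (X.mulVec u) / Real.sqrt m ∧
        enorm2 (X.mulVec u) / Real.sqrt m ≤ (1 + 4 * δ) * r := by
  intro u hu hl1
  obtain ⟨hδ1, hδ2⟩ := hδ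
  have hm0 : (0:ℝ) < Real.sqrt m := Real.sqrt_pos.2 (by exact_mod_cast hm)
  have hu0 : u ≠ 0 := by
    rintro rfl
    have : sqrtForm Sig (0 : Fin d → ℝ) = 0 := by simp [sqrtForm]
    rw [this] at hu; linarith
  have hd : 0 < d := by
    rcases Nat.eq_zero_or_pos d with h0 | h0
    · exfalso; apply hu0; subst h0; funext i; exact i.elim0
    · exact h0
  have hS0 : 0 < S := by
    set e : Fin d → ℝ := Pi.single ⟨0, hd⟩ 1 with he
    have hv : e ≠ 0 := by
      intro h
      have := congrFun h ⟨0, hd⟩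
      simp [he] at this
    have h1 := hSig.dotProduct_mulVec_pos hv
    rw [show star e = e from rfl] at h1
    have h2 := hS e
    have h3 : ∑ i, e i ^ 2 = 1 := by
      rw [he]
      rw [Finset.sum_eq_single (⟨0, hd⟩ : Fin d)]
      · simp
      · intro b _ hb; simp [Pi.single_apply, hb]
      · intro h; exact absurd (Finset.mem_univ _) h
    rw [h3, mul_one] at h2
    linarith
  have hk'0 : 0 < k' := by
    rcases Nat.eq_zero_or_pos k' with h0 | h0
    · exfalso
      apply hu0
      apply l1norm_eq_zero_imp
      rw [h0] at hl1
      simpa using hl1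
    · exact h0
  have hk'R : (0:ℝ) < k' := by exact_mod_cast hk'0
  have hkk : 0 < k'' := by
    by_contra h
    push_neg at h
    interval_cases k''
    have hpos : 0 < 4 * (k' : ℝ) * S / δ ^ 2 :=
      div_pos (by nlinarith) (by positivity)
    push_cast at hk
    linarith
  have hkR : (0:ℝ) < k'' := by exact_mod_cast hkk
  obtain ⟨w, hsp, hdecomp, htail⟩ := shelling u hkk hd
  set v : Fin d → ℝ := ∑ j ∈ Finset.range (d-1), w (j+1) with hv
  set T : ℝ := ∑ j ∈ Finset.range (d-1), sqrtForm Sig (w (j+1)) with hT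
  have hT0 : 0 ≤ T := Finset.sum_nonneg fun j _ => sqrtForm_nonneg _ _
  have hTv : sqrtForm Sig v ≤ T := sqrtForm_sum_le hSig.posSemidef _ _
  -- T ≤ δ r / 2
  have hTr : T ≤ δ * r / 2 := by
    have h1 : T ≤ Real.sqrt S * ∑ j ∈ Finset.range (d-1), enorm2 (w (j+1)) := by
      rw [Finset.mul_sum]
      exact Finset.sum_le_sum fun j _ =>
        sqrtForm_le_sqrt_mul hS0.le hS _
    have h2 : ∑ j ∈ Finset.range (d-1), enorm2 (w (j+1)) ≤
        r * Real.sqrt k' / Real.sqrt k'' := by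
      refine le_trans htail ?_
      have hsk : (0:ℝ) < Real.sqrt k'' := Real.sqrt_pos.2 hkR
      gcongr
    have hkey : Real.sqrt S * Real.sqrt k' ≤ δ / 2 * Real.sqrt k'' := by
      have h4 : S * k' ≤ (δ/2)^2 * k'' := by
        rw [div_le_iff₀ (by positivity : (0:ℝ) < δ^2)] at hk
        nlinarith
      calc Real.sqrt S * Real.sqrt k' = Real.sqrt (S * k') :=
            (Real.sqrt_mul hS0.le _).symm
        _ ≤ Real.sqrt ((δ/2)^2 * k'') := Real.sqrt_le_sqrt h4
        _ = δ / 2 * Real.sqrt k'' := by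
            rw [Real.sqrt_mul (sq_nonneg _), Real.sqrt_sq (by positivity : (0:ℝ) ≤ δ/2)]
    have hsk : (0:ℝ) < Real.sqrt k'' := Real.sqrt_pos.2 hkR
    calc T ≤ Real.sqrt S * (r * Real.sqrt k' / Real.sqrt k'') := by
          refine le_trans h1 ?_
          exact mul_le_mul_of_nonneg_left h2 (Real.sqrt_nonneg S)
      _ = r * (Real.sqrt S * Real.sqrt k') / Real.sqrt k'' := by ring
      _ ≤ r * (δ / 2 * Real.sqrt k'') / Real.sqrt k'' := by gcongr
      _ = δ * r / 2 := by field_simp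
  -- bounds on the head block
  set q : ℝ := sqrtForm Sig (w 0) with hq
  have hqT : |q - r| ≤ T := by
    have h1 : w 0 - u = -v := by rw [hdecomp]; abel
    have h2 : sqrtForm Sig (-v) = sqrtForm Sig v := by
      have : (-v : Fin d → ℝ) = (-1 : ℝ) • v := by funext i; simp
      rw [this, sqrtForm_smul hSig.posSemidef]
      simp
    calc |q - r| = |sqrtForm Sig (w 0) - sqrtForm Sig u| := by rw [hu]
      _ ≤ sqrtForm Sig (w 0 - u) := abs_sqrtForm_sub hSig.posSemidef _ _
      _ = sqrtForm Sig v := by rw [h1, h2]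
      _ ≤ T := hTv
  obtain ⟨hE01, hE02⟩ := scaledRIP Sig hSig X r δ k'' hr ⟨hδ1, hδ2⟩ hRIP (w 0) (hsp 0)
  rw [← hq] at hE01 hE02
  -- tail deviation
  have hdev : |enorm2 (X.mulVec u) / Real.sqrt m
      - enorm2 (X.mulVec (w 0)) / Real.sqrt m| ≤ (1 + δ) * T := by
    have h1 : u - w 0 = v := by rw [hdecomp]; abel
    have h2 : X.mulVec v = ∑ j ∈ Finset.range (d-1), X.mulVec (w (j+1)) := by
      rw [hv]
      simp only [← Matrix.mulVecLin_apply, map_sum]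
    calc |enorm2 (X.mulVec u) / Real.sqrt m - enorm2 (X.mulVec (w 0)) / Real.sqrt m|
        = |enorm2 (X.mulVec u) - enorm2 (X.mulVec (w 0))| / Real.sqrt m := by
          rw [div_sub_div_same, abs_div, abs_of_pos hm0]
      _ ≤ enorm2 (X.mulVec u - X.mulVec (w 0)) / Real.sqrt m := by
          gcongr
          exact abs_enorm2_sub _ _
      _ = enorm2 (X.mulVec v) / Real.sqrt m := by rw [← Matrix.mulVec_sub, h1]
      _ ≤ (∑ j ∈ Finset.range (d-1), enorm2 (X.mulVec (w (j+1)))) / Real.sqrt m := by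
          gcongr
          rw [h2]
          exact enorm2_sum_le _ _
      _ = ∑ j ∈ Finset.range (d-1), enorm2 (X.mulVec (w (j+1))) / Real.sqrt m := by
          rw [Finset.sum_div]
      _ ≤ ∑ j ∈ Finset.range (d-1), (1 + δ) * sqrtForm Sig (w (j+1)) :=
          Finset.sum_le_sum fun j _ =>
            (scaledRIP Sig hSig X r δ k'' hr ⟨hδ1, hδ2⟩ hRIP (w (j+1)) (hsp (j+1))).2
      _ = (1 + δ) * T := by rw [hT, Finset.mul_sum]
  obtain ⟨hqT1, hqT2⟩ := abs_le.mp hqT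
  obtain ⟨hdev1, hdev2⟩ := abs_le.mp hdev
  set E : ℝ := enorm2 (X.mulVec u) / Real.sqrt m with hE
  set E0 : ℝ := enorm2 (X.mulVec (w 0)) / Real.sqrt m with hE0
  have e1 : (1 - δ) * (r - T) ≤ (1 - δ) * q :=
    mul_le_mul_of_nonneg_left (by linarith) (by linarith)
  have e2 : (1 + δ) * q ≤ (1 + δ) * (r + T) :=
    mul_le_mul_of_nonneg_left (by linarith) (by linarith)
  have e3 : 0 ≤ δ * T := mul_nonneg hδ1.le hT0
  have e4 : 0 ≤ δ * r := mul_nonneg hδ1.le hr.le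
  have e5 : 0 ≤ (2 - δ) * (δ * r) := mul_nonneg (by linarith) e4
  clear_value v T q E E0
  clear hv hT hq hE hE0 hqT hdev htail hdecomp hsp
  clear hTv
  clear hRIP hS w X Sig hSig u hu hl1 hu0 v
  constructor
  · nlinarith [e1, e3, e4, hE01, hdev1, hTr]
  · nlinarith [e2, e3, e4, e5, hE02, hdev2, hTr]
end

section
/- Let X* ∈ ℝ^d be a random vector, t ∈ ℕ, B > 0, q > 0 with max_{j∈[d]} E|X*_j|^{t+q} ≤ B^{t+q}. Define the entrywise truncation X'(τ) with X'_j(τ) = X*_j·1[|X*_j| ≤ τ]. Then ‖E (X'(τ))^{⊗t} − E (X*)^{⊗t}‖_∞ ≤ t · B^{t+q} / τ^q, where the ℓ∞ norm is the maximum absolute entry of the order-t tensor. -/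
/-!
Pointwise, for `a ∈ ℝⁿ`: if every coordinate lies in `[-τ, τ]` the truncated product equals
`∏ a i`. Otherwise the truncated product vanishes and the largest coordinate `M = max |a i|` exceeds `τ`, so
`|∏ a i| ≤ M ^ n ≤ M ^ (n + q) / τ ^ q ≤ ∑ |a i| ^ (n + q) / τ ^ q` (a Markov-type bound).
Taking expectations and using the moment bound for each of the `t` factors gives `t · B^(t+q) / τ^q`.
-/

open MeasureTheory Finset

noncomputable def trunc (τ x : ℝ) : ℝ := if |x| ≤ τ then x else 0

lemma abs_trunc_le {τ : ℝ} (hτ : 0 ≤ τ) (x : ℝ) : |trunc τ x| ≤ τ := by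
  unfold trunc
  split_ifs with h
  · exact h
  · simpa using hτ

lemma measurable_trunc (τ : ℝ) : Measurable (trunc τ) :=
  Measurable.ite (measurableSet_le measurable_id.abs measurable_const) measurable_id
    measurable_const

lemma prod_abs_le_pow_card {ι : Type*} [Fintype ι] {a : ι → ℝ} {M : ℝ} (h : ∀ i, |a i| ≤ M) :
    ∏ i, |a i| ≤ M ^ Fintype.card ι :=
  calc ∏ i, |a i| ≤ ∏ _i : ι, M := prod_le_prod (fun i _ => abs_nonneg _) (fun i _ => h i)
    _ = M ^ Fintype.card ι := by rw [prod_const, card_univ]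

lemma pow_le_rpow_add_div_rpow {τ M q : ℝ} (hτ : 0 < τ) (hτM : τ ≤ M) (hq : 0 ≤ q) (n : ℕ) :
    M ^ n ≤ M ^ ((n : ℝ) + q) / τ ^ q := by
  have hM : 0 < M := hτ.trans_le hτM
  rw [le_div_iff₀ (Real.rpow_pos_of_pos hτ q), Real.rpow_add hM, Real.rpow_natCast]
  exact mul_le_mul_of_nonneg_left (Real.rpow_le_rpow hτ.le hτM hq) (pow_nonneg hM.le n)

lemma abs_prod_trunc_sub_prod_le {ι : Type*} [Fintype ι] (a : ι → ℝ) {τ q : ℝ} (hτ : 0 < τ)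
    (hq : 0 ≤ q) :
    |∏ i, trunc τ (a i) - ∏ i, a i| ≤
      (∑ i, |a i| ^ ((Fintype.card ι : ℝ) + q)) / τ ^ q := by
  by_cases hsmall : ∀ i, |a i| ≤ τ
  · have hprod : ∏ i, trunc τ (a i) = ∏ i, a i :=
      prod_congr rfl fun i _ => if_pos (hsmall i)
    rw [hprod, sub_self, abs_zero]
    exact div_nonneg (sum_nonneg fun i _ => by positivity) (by positivity)
  obtain ⟨i₀, hi₀⟩ := not_forall.mp hsmall
  have : Nonempty ι := ⟨i₀⟩
  obtain ⟨i₁, hi₁⟩ := Finite.exists_max fun i => |a i|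
  have hprod : ∏ i, trunc τ (a i) = 0 :=
    prod_eq_zero (mem_univ i₀) (if_neg hi₀)
  rw [hprod, zero_sub, abs_neg, abs_prod]
  calc ∏ i, |a i| ≤ |a i₁| ^ Fintype.card ι := prod_abs_le_pow_card hi₁
    _ ≤ |a i₁| ^ ((Fintype.card ι : ℝ) + q) / τ ^ q :=
      pow_le_rpow_add_div_rpow hτ ((not_le.mp hi₀).le.trans (hi₁ i₀)) hq _
    _ ≤ (∑ i, |a i| ^ ((Fintype.card ι : ℝ) + q)) / τ ^ q := by
      gcongr
      exact single_le_sum (f := fun i => |a i| ^ ((Fintype.card ι : ℝ) + q))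
        (fun i _ => by positivity) (mem_univ i₁)

lemma abs_integral_prod_trunc_sub_integral_prod_le {Ω ι : Type*} [MeasurableSpace Ω]
    {μ : Measure Ω} [IsFiniteMeasure μ] [Fintype ι] {Y : Ω → ι → ℝ} {τ q : ℝ} (hτ : 0 < τ)
    (hq : 0 ≤ q) (hmeas : ∀ i, Measurable fun ω => Y ω i)
    (hint : ∀ i, Integrable (fun ω => |Y ω i| ^ ((Fintype.card ι : ℝ) + q)) μ) :
    |(∫ ω, ∏ i, trunc τ (Y ω i) ∂μ) - ∫ ω, ∏ i, Y ω i ∂μ| ≤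
      (∑ i, ∫ ω, |Y ω i| ^ ((Fintype.card ι : ℝ) + q) ∂μ) / τ ^ q := by
  set f := fun ω => ∏ i, trunc τ (Y ω i)
  set g := fun ω => ∏ i, Y ω i
  have hfm : Measurable f := measurable_prod _ fun i _ => (measurable_trunc τ).comp (hmeas i)
  have hgm : Measurable g := measurable_prod _ fun i _ => hmeas i
  have hbound := (integrable_finsetSum univ fun i _ => hint i).div_const (τ ^ q)
  have hf : Integrable f μ := by
    refine Integrable.of_bound hfm.aestronglyMeasurable (τ ^ Fintype.card ι) (ae_of_all _ ?_)
    intro ω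
    rw [Real.norm_eq_abs, abs_prod]
    exact prod_abs_le_pow_card fun i => abs_trunc_le hτ.le _
  -- `g` is integrable because it differs from the bounded `f` by a function dominated by `hbound`.
  have hfg : Integrable (f - g) μ :=
    hbound.mono' (hfm.sub hgm).aestronglyMeasurable
      (ae_of_all _ fun ω => abs_prod_trunc_sub_prod_le (Y ω) hτ hq)
  have hg : Integrable g μ := by simpa using hf.sub hfg
  calc |(∫ ω, f ω ∂μ) - ∫ ω, g ω ∂μ| = |∫ ω, (f - g) ω ∂μ| := by
        rw [← integral_sub hf hg]; rfl
    _ ≤ ∫ ω, |(f - g) ω| ∂μ := abs_integral_le_integral_abs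
    _ ≤ ∫ ω, (∑ i, |Y ω i| ^ ((Fintype.card ι : ℝ) + q)) / τ ^ q ∂μ :=
        integral_mono hfg.abs hbound fun ω => abs_prod_trunc_sub_prod_le (Y ω) hτ hq
    _ = (∑ i, ∫ ω, |Y ω i| ^ ((Fintype.card ι : ℝ) + q) ∂μ) / τ ^ q := by
        rw [integral_div, integral_finsetSum univ fun i _ => hint i]

theorem truncation_tensor_expectation_bound_general {Ω : Type*} [MeasurableSpace Ω]
    (μ : Measure Ω) [IsProbabilityMeasure μ] {d : ℕ} (t : ℕ)
    (X : Ω → Fin d → ℝ) (hmeas : ∀ j, Measurable fun ω => X ω j)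
    (B q τ : ℝ) (hq : 0 < q) (hτ : 0 < τ)
    (hLp : ∀ j, MemLp (fun ω => X ω j) (ENNReal.ofReal ((t : ℝ) + q)) μ)
    (hmom : ∀ j, ∫ ω, |X ω j| ^ ((t : ℝ) + q) ∂μ ≤ B ^ ((t : ℝ) + q)) :
    ∀ j : Fin t → Fin d,
      |(∫ ω, ∏ s, trunc τ (X ω (j s)) ∂μ) - ∫ ω, ∏ s, X ω (j s) ∂μ| ≤
        (t : ℝ) * B ^ ((t : ℝ) + q) / τ ^ q := by
  intro j
  have htq : (0 : ℝ) < t + q := by positivity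
  have hint : ∀ k, Integrable (fun ω => |X ω k| ^ ((t : ℝ) + q)) μ := fun k => by
    simpa [ENNReal.toReal_ofReal htq.le] using
      (hLp k).integrable_norm_rpow (by simpa using htq) ENNReal.ofReal_ne_top
  have key := abs_integral_prod_trunc_sub_integral_prod_le (Y := fun ω s => X ω (j s)) hτ hq.le
    (fun s => hmeas (j s)) (by simpa using fun s => hint (j s))
  rw [Fintype.card_fin] at key
  refine key.trans (div_le_div_of_nonneg_right ?_ (Real.rpow_pos_of_pos hτ q).le)
  calc ∑ s, ∫ ω, |X ω (j s)| ^ ((t : ℝ) + q) ∂μ ≤ ∑ _s : Fin t, B ^ ((t : ℝ) + q) :=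
        sum_le_sum fun s _ => hmom (j s)
    _ = t * B ^ ((t : ℝ) + q) := by simp

/-- If `max_j E|X_j|^{t+q} ≤ B^{t+q}`, then every entry of the difference between the
expected order-`t` tensor of the entrywise truncation `X'(τ)` and that of `X` is bounded
by `t · B^{t+q} / τ^q`. -/
theorem truncation_tensor_expectation_bound {Ω : Type*} [MeasurableSpace Ω]
    (μ : Measure Ω) [IsProbabilityMeasure μ] {d : ℕ} (t : ℕ) (ht : 1 ≤ t)
    (X : Ω → Fin d → ℝ) (hmeas : ∀ j, Measurable fun ω => X ω j)
    (B q τ : ℝ) (hB : 0 < B) (hq : 0 < q) (hτ : 0 < τ)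
    (hLp : ∀ j, MemLp (fun ω => X ω j) (ENNReal.ofReal ((t : ℝ) + q)) μ)
    (hmom : ∀ j, ∫ ω, |X ω j| ^ ((t : ℝ) + q) ∂μ ≤ B ^ ((t : ℝ) + q)) :
    ∀ j : Fin t → Fin d,
      |(∫ ω, ∏ s, trunc τ (X ω (j s)) ∂μ) - ∫ ω, ∏ s, X ω (j s) ∂μ| ≤
        (t : ℝ) * B ^ ((t : ℝ) + q) / τ ^ q :=
  truncation_tensor_expectation_bound_general μ t X hmeas B q τ hq hτ hLp hmom
end

section
/- Suppose w ∈ ℝⁿ with w_i ≥ 0, u ∈ ℝ^d, γ₁, γ₂, λ > 0, and vectors a_i ∈ ℝ^d, ψ_i ∈ [−2,2] satisfy: (1) |∑_i w_i ψ_i ⟨a_i, u⟩| ≤ γ₁‖u‖₁ + γ₂‖Σ^{1/2}u‖, (2) λ ≥ 2γ₁, (3) H(β* + u) + λ‖β* + u‖₁ ≤ H(β*) + λ‖β*‖₁ where H is a convex function with ∇H(β*)·u = ∑_i w_i ψ_i ⟨a_i, u⟩ (i.e., H(β*+u) − H(β*) ≥ ∑_i w_i ψ_i ⟨a_i, u⟩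 by convexity), and β* is k-sparse. Then ‖u‖₁ ≤ (4√(k/σ_min) + 2γ₂/λ)·‖Σ^{1/2}u‖, where σ_min is the minimal eigenvalue of the positive definite matrix Σ. -/
open Matrix Finset

/-- ℓ¹–ℓ² bound for the minimizer of the penalized weighted Huber loss.
Here `H` is the (convex) loss, `hgrad` expresses the convexity inequality
`H(β*+u) − H(β*) ≥ ⟨∇H(β*), u⟩ = ∑ᵢ wᵢ ψᵢ ⟨aᵢ, u⟩`, `h1` is the gradient bound,
`h2` the penalty-size condition, and `h3` says `β* + u` does not increase the
penalized loss. `σmin` is (a lower bound on) the minimal eigenvalue of `Σ`. -/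
theorem l1_l2_bound {n d k : ℕ} (Sig : Matrix (Fin d) (Fin d) ℝ) (hSig : Sig.PosDef)
    (σmin : ℝ) (hσ : 0 < σmin)
    (hmin : ∀ v : Fin d → ℝ, σmin * ∑ i, v i ^ 2 ≤ v ⬝ᵥ Sig.mulVec v)
    (w : Fin n → ℝ) (hw : ∀ i, 0 ≤ w i)
    (u β : Fin d → ℝ) (γ₁ γ₂ lam : ℝ) (hγ₁ : 0 < γ₁) (hγ₂ : 0 < γ₂) (hlam : 0 < lam)
    (a : Fin n → Fin d → ℝ) (ψ : Fin n → ℝ) (hψ : ∀ i, |ψ i| ≤ 2)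
    (H : (Fin d → ℝ) → ℝ)
    (hsparse : Set.ncard {j | β j ≠ 0} ≤ k)
    (h1 : |∑ i, w i * ψ i * ∑ j, a i j * u j| ≤ γ₁ * l1norm u + γ₂ * sqrtForm Sig u)
    (h2 : 2 * γ₁ ≤ lam)
    (hgrad : (∑ i, w i * ψ i * ∑ j, a i j * u j) ≤ H (β + u) - H β)
    (h3 : H (β + u) + lam * l1norm (β + u) ≤ H β + lam * l1norm β) :
    l1norm u ≤ (4 * Real.sqrt (k / σmin) + 2 * γ₂ / lam) * sqrtForm Sig u := by
  classical
  set S : Finset (Fin d) := Finset.univ.filter (fun j => β j ≠ 0) with hS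
  set A : ℝ := ∑ j ∈ S, |u j| with hA
  set B : ℝ := ∑ j ∈ Finset.univ.filter (fun j => ¬ β j ≠ 0), |u j| with hB
  set T : ℝ := sqrtForm Sig u with hT
  set Q : ℝ := u ⬝ᵥ Sig.mulVec u with hQ
  have hsum2 : (0:ℝ) ≤ ∑ j, u j ^ 2 := Finset.sum_nonneg fun j _ => sq_nonneg _
  have hQ0 : 0 ≤ Q := le_trans (by positivity) (hmin u)
  have hT0 : 0 ≤ T := Real.sqrt_nonneg _
  have hTQ : T ^ 2 = Q := Real.sq_sqrt hQ0
  have hA0 : 0 ≤ A := Finset.sum_nonneg fun j _ => abs_nonneg _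
  have hB0 : 0 ≤ B := Finset.sum_nonneg fun j _ => abs_nonneg _
  have hcard : (S.card : ℝ) ≤ (k : ℝ) := by
    have hst : {j | β j ≠ 0} = (S : Set (Fin d)) := by ext j; simp [hS]
    rw [hst, Set.ncard_coe_finset] at hsparse
    exact_mod_cast hsparse
  have hsplitu : l1norm u = A + B := by
    rw [l1norm, ← Finset.sum_filter_add_sum_filter_not Finset.univ (fun j => β j ≠ 0)]
  have hsplitβ : l1norm β = ∑ j ∈ S, |β j| := by
    rw [l1norm, ← Finset.sum_filter_add_sum_filter_not Finset.univ (fun j => β j ≠ 0)]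
    have hz : ∑ j ∈ Finset.univ.filter (fun j => ¬ β j ≠ 0), |β j| = 0 := by
      apply Finset.sum_eq_zero
      intro j hj
      simp only [Finset.mem_filter, not_not] at hj
      simp [hj.2]
    rw [hz, add_zero]
  have hsplitβu : l1norm (β + u) = (∑ j ∈ S, |β j + u j|) + B := by
    rw [l1norm, ← Finset.sum_filter_add_sum_filter_not Finset.univ (fun j => β j ≠ 0)]
    have e1 : ∑ j ∈ Finset.univ.filter (fun j => β j ≠ 0), |(β + u) j|
        = ∑ j ∈ S, |β j + u j| := by
      apply Finset.sum_congr rfl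
      intro j _
      simp [Pi.add_apply]
    have e2 : ∑ j ∈ Finset.univ.filter (fun j => ¬ β j ≠ 0), |(β + u) j| = B := by
      apply Finset.sum_congr rfl
      intro j hj
      simp only [Finset.mem_filter, not_not] at hj
      simp [Pi.add_apply, hj.2]
    rw [e1, e2]
  have hlow : B - A ≤ l1norm (β + u) - l1norm β := by
    rw [hsplitβu, hsplitβ]
    have h7 : ∑ j ∈ S, |β j| - A ≤ ∑ j ∈ S, |β j + u j| := by
      rw [hA, ← Finset.sum_sub_distrib]
      apply Finset.sum_le_sum
      intro j _
      have h8 := abs_sub_abs_le_abs_sub (β j) (-(u j))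
      simp only [sub_neg_eq_add, abs_neg] at h8
      linarith
    linarith
  have hkey : lam * (l1norm (β + u) - l1norm β) ≤ γ₁ * l1norm u + γ₂ * T := by
    have h4 : ∑ i, w i * ψ i * ∑ j, a i j * u j ≤ lam * (l1norm β - l1norm (β + u)) := by
      nlinarith [hgrad, h3]
    have h5 : -(γ₁ * l1norm u + γ₂ * T) ≤ ∑ i, w i * ψ i * ∑ j, a i j * u j := by
      have h6 := (abs_le.mp h1).1
      rw [hT]; linarith
    linarith
  have hBA : lam * (B - A) ≤ γ₁ * (A + B) + γ₂ * T := by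
    have h9 := mul_le_mul_of_nonneg_left hlow (le_of_lt hlam)
    rw [hsplitu] at hkey
    linarith
  have hBbound : lam * B ≤ 3 * lam * A + 2 * γ₂ * T := by nlinarith
  have hCS : A ^ 2 ≤ (k : ℝ) * (Q / σmin) := by
    have h10 : A ^ 2 ≤ (S.card : ℝ) * ∑ j ∈ S, |u j| ^ 2 := by
      exact_mod_cast sq_sum_le_card_mul_sum_sq (s := S) (f := fun j => |u j|)
    have h11 : ∑ j ∈ S, |u j| ^ 2 ≤ ∑ j, u j ^ 2 := by
      simp only [sq_abs]
      exact Finset.sum_le_sum_of_subset_of_nonneg (Finset.subset_univ S)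
        (fun j _ _ => sq_nonneg _)
    have h12 : ∑ j, u j ^ 2 ≤ Q / σmin := by
      rw [le_div_iff₀ hσ]
      have := hmin u
      linarith [hmin u]
    calc A ^ 2 ≤ (S.card : ℝ) * ∑ j ∈ S, |u j| ^ 2 := h10
      _ ≤ (k : ℝ) * ∑ j ∈ S, |u j| ^ 2 := by
          apply mul_le_mul_of_nonneg_right hcard (Finset.sum_nonneg fun j _ => sq_nonneg _)
      _ ≤ (k : ℝ) * (Q / σmin) := by
          apply mul_le_mul_of_nonneg_left _ (Nat.cast_nonneg k)
          exact le_trans h11 h12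
  have hAT : A ≤ Real.sqrt ((k : ℝ) / σmin) * T := by
    have h13 : A = Real.sqrt (A ^ 2) := (Real.sqrt_sq hA0).symm
    rw [h13]
    have h14 : Real.sqrt ((k : ℝ) / σmin) * T = Real.sqrt ((k : ℝ) / σmin * Q) := by
      rw [hT, sqrtForm, ← hQ, ← Real.sqrt_mul (by positivity)]
    rw [h14]
    apply Real.sqrt_le_sqrt
    calc A ^ 2 ≤ (k : ℝ) * (Q / σmin) := hCS
      _ = (k : ℝ) / σmin * Q := by ring
  have hBfin : B ≤ 3 * A + 2 * γ₂ / lam * T := by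
    have h16 : lam * (3 * A + 2 * γ₂ / lam * T) = 3 * lam * A + 2 * γ₂ * T := by
      field_simp
    have h15 : lam * B ≤ lam * (3 * A + 2 * γ₂ / lam * T) := by
      rw [h16]; exact hBbound
    exact le_of_mul_le_mul_left h15 hlam
  rw [hsplitu]
  have hfin : A + B ≤ 4 * A + 2 * γ₂ / lam * T := by linarith
  calc A + B ≤ 4 * A + 2 * γ₂ / lam * T := hfin
    _ ≤ 4 * (Real.sqrt ((k:ℝ) / σmin) * T) + 2 * γ₂ / lam * T := by linarith
    _ = (4 * Real.sqrt ((k:ℝ) / σmin) + 2 * γ₂ / lam) * T := by ring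
end

section
/- Suppose weights w satisfy 0 ≤ w_i ≤ 1/n and ∑_i w_i ≥ 1 − ε̃, vectors X''_i, X'_i ∈ ℝ^d, a set S_bad ⊆ [n] with |S_bad| ≤ ε̃n such that X''_i = X'_i for i ∉ S_bad, numbers ψ_i, ψ'_i ∈ [−2,2], u ∈ ℝ^d, and b, γ₁ > 0 satisfy: ∑_i w_i⟨X''_i,u⟩^{2t} ≤ b^{2t}‖Σ^{1/2}u‖^{2t}, (1/n)∑_i⟨X'_i,u⟩^{2t} ≤ b^{2t}‖Σ^{1/2}u‖^{2t}, and ‖(1/n)∑_i ψ_i X'_i‖_∞ ≤ γ₁. Then |∑_i w_i ψ'_i⟨X''_i,u⟩| ≤ γ₁‖u‖₁ + 6 b ε̃^{1−1/(2t)} ‖Σ^{1/2}u‖, provided ψ'_i = ψ_i for i ∉ S_bad. -/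
open Matrix Finset

lemma holder_abs {n t : ℕ} (ht : 1 ≤ t) (a f : Fin n → ℝ) (s : Finset (Fin n))
    (ha : ∀ i, 0 ≤ a i) {ε C : ℝ} (hC : 0 ≤ C)
    (hs : ∑ i ∈ s, a i ≤ ε)
    (hm : ∑ i ∈ s, a i * f i ^ (2 * t) ≤ C ^ (2 * t)) :
    ∑ i ∈ s, a i * |f i| ≤ ε ^ (1 - 1 / (2 * (t : ℝ))) * C := by
  have h2t : (2 * t : ℕ) ≠ 0 := by omega
  have hp : (1 : ℝ) ≤ ((2 * t : ℕ) : ℝ) := by exact_mod_cast (by omega : 1 ≤ 2 * t)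
  have hpinv : ((2 * t : ℕ) : ℝ)⁻¹ ≤ 1 := inv_le_one_of_one_le₀ hp
  have hα : (0:ℝ) ≤ 1 - ((2 * t : ℕ) : ℝ)⁻¹ := by linarith
  have h1 := Real.inner_le_weight_mul_Lp_of_nonneg s hp a (fun i => |f i|) ha
    (fun i => abs_nonneg _)
  have habs : ∀ i, |f i| ^ (((2 * t : ℕ)) : ℝ) = f i ^ (2 * t) := fun i => by
    rw [Real.rpow_natCast, Even.pow_abs (even_two_mul t)]
  simp only [habs] at h1
  have hsum0 : (0:ℝ) ≤ ∑ i ∈ s, a i := sum_nonneg fun i _ => ha i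
  have hsum1 : (0:ℝ) ≤ ∑ i ∈ s, a i * f i ^ (2 * t) :=
    sum_nonneg fun i _ => mul_nonneg (ha i) ((even_two_mul t).pow_nonneg _)
  have h2 : (∑ i ∈ s, a i) ^ (1 - ((2 * t : ℕ) : ℝ)⁻¹) *
      (∑ i ∈ s, a i * f i ^ (2 * t)) ^ (((2 * t : ℕ) : ℝ))⁻¹ ≤
      ε ^ (1 - ((2 * t : ℕ) : ℝ)⁻¹) * ((C ^ (2 * t) : ℝ)) ^ (((2 * t : ℕ) : ℝ))⁻¹ :=
    mul_le_mul (Real.rpow_le_rpow hsum0 hs hα) (Real.rpow_le_rpow hsum1 hm (by positivity))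
      (Real.rpow_nonneg hsum1 _) (Real.rpow_nonneg (le_trans hsum0 hs) _)
  have h3 : ((C ^ (2 * t) : ℝ)) ^ (((2 * t : ℕ) : ℝ))⁻¹ = C :=
    Real.pow_rpow_inv_natCast hC h2t
  have h4 : (1 : ℝ) - ((2 * t : ℕ) : ℝ)⁻¹ = 1 - 1 / (2 * (t : ℝ)) := by
    push_cast; rw [one_div]
  rw [h3, h4] at h2
  exact le_trans (le_trans h1 (le_of_eq (by rw [h4]))) h2

/-- Gradient bound: weights `w` in the truncated simplex, covariates `X''` agreeing with
`X'` off a bad set of size at most `ε̃n`, bounded multipliers `ψ', ψ` agreeing off the bad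
set, `2t`-th empirical moment bounds on both covariate families, and an entrywise bound on
`(1/n)∑ᵢ ψᵢ X'ᵢ` together imply
`|∑ᵢ wᵢ ψ'ᵢ⟨X''ᵢ,u⟩| ≤ γ₁‖u‖₁ + 6 b ε̃^{1−1/(2t)} ‖Σ^{1/2}u‖`. -/
theorem gradient_bound {n d t : ℕ} (hn : 0 < n) (ht : 1 ≤ t)
    (Sig : Matrix (Fin d) (Fin d) ℝ) (hSig : Sig.PosDef)
    (ε : ℝ) (hε : 0 ≤ ε) (hε1 : ε ≤ 1)
    (w : Fin n → ℝ) (hw : ∀ i, 0 ≤ w i ∧ w i ≤ 1 / n) (hwsum : 1 - ε ≤ ∑ i, w i)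
    (X'' X' : Fin n → Fin d → ℝ) (Sbad : Finset (Fin n)) (hbad : (Sbad.card : ℝ) ≤ ε * n)
    (hXX : ∀ i ∉ Sbad, X'' i = X' i)
    (ψ' ψ : Fin n → ℝ) (hψ : ∀ i, |ψ i| ≤ 2) (hψ' : ∀ i, |ψ' i| ≤ 2)
    (hψψ : ∀ i ∉ Sbad, ψ' i = ψ i)
    (u : Fin d → ℝ) (b γ₁ : ℝ) (hb : 0 < b) (hγ₁ : 0 < γ₁)
    (hm1 : ∑ i, w i * (∑ j, X'' i j * u j) ^ (2 * t) ≤ b ^ (2 * t) * sqrtForm Sig u ^ (2 * t))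
    (hm2 : (1 / n) * ∑ i, (∑ j, X' i j * u j) ^ (2 * t) ≤ b ^ (2 * t) * sqrtForm Sig u ^ (2 * t))
    (hγ : ∀ j, |(1 / n) * ∑ i, ψ i * X' i j| ≤ γ₁) :
    |∑ i, w i * ψ' i * ∑ j, X'' i j * u j| ≤
      γ₁ * l1norm u + 6 * b * ε ^ (1 - 1 / (2 * (t : ℝ))) * sqrtForm Sig u := by
  have hnpos : (0:ℝ) < n := by exact_mod_cast hn
  set M := sqrtForm Sig u with hMdef
  have hM0 : 0 ≤ M := Real.sqrt_nonneg _
  set v : Fin n → ℝ := fun i => ∑ j, X'' i j * u j with hvdef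
  set v' : Fin n → ℝ := fun i => ∑ j, X' i j * u j with hv'def
  have hbM : b ^ (2*t) * M ^ (2*t) = (b * M) ^ (2*t) := (mul_pow b M (2*t)).symm
  have hpow0 : ∀ x : ℝ, 0 ≤ x ^ (2*t) := fun x => (even_two_mul t).pow_nonneg x
  have hεn : (Sbad.card : ℝ) / n ≤ ε := by
    rw [div_le_iff₀ hnpos]; exact hbad
  set α : ℝ := ε ^ (1 - 1 / (2 * (t : ℝ))) with hαdef
  -- bound A
  have hswA : ∑ i ∈ Sbad, w i ≤ ε := by
    calc ∑ i ∈ Sbad, w i ≤ ∑ _i ∈ Sbad, (1/n : ℝ) := sum_le_sum fun i _ => (hw i).2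
      _ = (Sbad.card : ℝ) / n := by rw [sum_const, nsmul_eq_mul]; ring
      _ ≤ ε := hεn
  have hmA : ∑ i ∈ Sbad, w i * v i ^ (2*t) ≤ (b * M) ^ (2*t) := by
    rw [← hbM]
    refine le_trans (sum_le_sum_of_subset_of_nonneg (subset_univ _)
      (fun i _ _ => mul_nonneg (hw i).1 (hpow0 _))) hm1
  have hA := holder_abs ht w v Sbad (fun i => (hw i).1) (mul_nonneg hb.le hM0) hswA hmA
  have habsA : |∑ i ∈ Sbad, w i * ψ' i * v i| ≤ 2 * (α * (b * M)) := by
    calc |∑ i ∈ Sbad, w i * ψ' i * v i| ≤ ∑ i ∈ Sbad, |w i * ψ' i * v i| :=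
        abs_sum_le_sum_abs _ _
      _ ≤ ∑ i ∈ Sbad, 2 * (w i * |v i|) := by
        refine sum_le_sum fun i _ => ?_
        rw [abs_mul, abs_mul, abs_of_nonneg (hw i).1]
        calc w i * |ψ' i| * |v i| ≤ w i * 2 * |v i| := by
              gcongr
              · exact (hw i).1
              · exact hψ' i
          _ = 2 * (w i * |v i|) := by ring
      _ = 2 * ∑ i ∈ Sbad, w i * |v i| := by rw [mul_sum]
      _ ≤ 2 * (α * (b * M)) := by linarith
  -- bound B
  have hswB : ∑ _i ∈ Sbad, (1/n : ℝ) ≤ ε := by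
    rw [sum_const, nsmul_eq_mul]
    calc (Sbad.card : ℝ) * (1/n) = (Sbad.card : ℝ) / n := by ring
      _ ≤ ε := hεn
  have hm2' : ∑ i, (1/n : ℝ) * v' i ^ (2*t) ≤ (b * M) ^ (2*t) := by
    rw [← hbM, ← mul_sum] at *; exact hm2
  have hmB : ∑ i ∈ Sbad, (1/n : ℝ) * v' i ^ (2*t) ≤ (b * M) ^ (2*t) := by
    refine le_trans (sum_le_sum_of_subset_of_nonneg (subset_univ _)
      (fun i _ _ => mul_nonneg (by positivity) (hpow0 _))) hm2'
  have hB := holder_abs ht (fun _ => (1/n : ℝ)) v' Sbad (fun i => by positivity)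
    (mul_nonneg hb.le hM0) hswB hmB
  have habsB : |∑ i ∈ Sbad, (1/n : ℝ) * ψ i * v' i| ≤ 2 * (α * (b * M)) := by
    calc |∑ i ∈ Sbad, (1/n : ℝ) * ψ i * v' i| ≤ ∑ i ∈ Sbad, |(1/n : ℝ) * ψ i * v' i| :=
        abs_sum_le_sum_abs _ _
      _ ≤ ∑ i ∈ Sbad, 2 * ((1/n : ℝ) * |v' i|) := by
        refine sum_le_sum fun i _ => ?_
        rw [abs_mul, abs_mul, abs_of_nonneg (by positivity : (0:ℝ) ≤ 1/n)]
        calc (1/n : ℝ) * |ψ i| * |v' i| ≤ (1/n : ℝ) * 2 * |v' i| := by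
              gcongr
              exact hψ i
          _ = 2 * ((1/n : ℝ) * |v' i|) := by ring
      _ = 2 * ∑ i ∈ Sbad, (1/n : ℝ) * |v' i| := by rw [mul_sum]
      _ ≤ 2 * (α * (b * M)) := by linarith
  -- bound C
  have haC : ∀ i, (0:ℝ) ≤ 1/n - w i := fun i => by linarith [(hw i).2]
  have hswC : ∑ i ∈ Sbadᶜ, ((1/n : ℝ) - w i) ≤ ε := by
    have h1 : ∑ i ∈ Sbadᶜ, ((1/n : ℝ) - w i) ≤ ∑ i, ((1/n : ℝ) - w i) :=
      sum_le_sum_of_subset_of_nonneg (subset_univ _) (fun i _ _ => haC i)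
    have h2 : ∑ i : Fin n, ((1/n : ℝ) - w i) = 1 - ∑ i, w i := by
      rw [sum_sub_distrib, sum_const, card_univ, Fintype.card_fin, nsmul_eq_mul,
        mul_one_div_cancel (ne_of_gt hnpos)]
    linarith
  have hmC : ∑ i ∈ Sbadᶜ, ((1/n : ℝ) - w i) * v' i ^ (2*t) ≤ (b * M) ^ (2*t) := by
    refine le_trans (le_trans (sum_le_sum_of_subset_of_nonneg (subset_univ _)
      (fun i _ _ => mul_nonneg (haC i) (hpow0 _)))
      (sum_le_sum fun i _ => mul_le_mul_of_nonneg_right (by linarith [(hw i).1]) (hpow0 _))) hm2'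
  have hC := holder_abs ht (fun i => (1/n : ℝ) - w i) v' Sbadᶜ haC
    (mul_nonneg hb.le hM0) hswC hmC
  have habsC : |∑ i ∈ Sbadᶜ, (w i - 1/n) * ψ i * v' i| ≤ 2 * (α * (b * M)) := by
    calc |∑ i ∈ Sbadᶜ, (w i - 1/n) * ψ i * v' i|
        ≤ ∑ i ∈ Sbadᶜ, |(w i - 1/n) * ψ i * v' i| := abs_sum_le_sum_abs _ _
      _ ≤ ∑ i ∈ Sbadᶜ, 2 * (((1/n : ℝ) - w i) * |v' i|) := by
        refine sum_le_sum fun i _ => ?_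
        rw [abs_mul, abs_mul]
        have : |w i - 1/n| = (1/n : ℝ) - w i := by
          rw [abs_of_nonpos (by linarith [(hw i).2])]; ring
        rw [this]
        calc ((1/n : ℝ) - w i) * |ψ i| * |v' i| ≤ ((1/n : ℝ) - w i) * 2 * |v' i| := by
              gcongr
              · exact haC i
              · exact hψ i
          _ = 2 * (((1/n : ℝ) - w i) * |v' i|) := by ring
      _ = 2 * ∑ i ∈ Sbadᶜ, ((1/n : ℝ) - w i) * |v' i| := by rw [mul_sum]
      _ ≤ 2 * (α * (b * M)) := by linarith
  -- bound T₀
  have hT0 : |∑ i, (1/n : ℝ) * ψ i * v' i| ≤ γ₁ * l1norm u := by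
    have hrw : ∑ i, (1/n : ℝ) * ψ i * v' i
        = ∑ j, ((1/n : ℝ) * ∑ i, ψ i * X' i j) * u j := by
      simp only [hv'def, Finset.mul_sum, Finset.sum_mul]
      rw [Finset.sum_comm]
      exact sum_congr rfl fun j _ => sum_congr rfl fun i _ => by ring
    rw [hrw]
    calc |∑ j, ((1/n : ℝ) * ∑ i, ψ i * X' i j) * u j|
        ≤ ∑ j, |((1/n : ℝ) * ∑ i, ψ i * X' i j) * u j| := abs_sum_le_sum_abs _ _
      _ ≤ ∑ j, γ₁ * |u j| := by
        refine sum_le_sum fun j _ => ?_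
        rw [abs_mul]
        exact mul_le_mul_of_nonneg_right (hγ j) (abs_nonneg _)
      _ = γ₁ * l1norm u := by rw [l1norm, mul_sum]
  -- decomposition
  have hsplit : ∀ g : Fin n → ℝ, ∑ i, g i = ∑ i ∈ Sbad, g i + ∑ i ∈ Sbadᶜ, g i :=
    fun g => (Finset.sum_add_sum_compl Sbad g).symm
  have hcomp : ∑ i ∈ Sbadᶜ, w i * ψ' i * v i
      = ∑ i ∈ Sbadᶜ, ((w i - 1/n) * ψ i * v' i + (1/n : ℝ) * ψ i * v' i) := by
    refine sum_congr rfl fun i hi => ?_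
    have hi' : i ∉ Sbad := mem_compl.mp hi
    have hvv : v i = v' i := by simp only [hvdef, hv'def, hXX i hi']
    rw [hψψ i hi', hvv]; ring
  have hdecomp : ∑ i, w i * ψ' i * v i
      = (∑ i, (1/n : ℝ) * ψ i * v' i)
        + ((∑ i ∈ Sbad, w i * ψ' i * v i) - (∑ i ∈ Sbad, (1/n : ℝ) * ψ i * v' i)
          + ∑ i ∈ Sbadᶜ, (w i - 1/n) * ψ i * v' i) := by
    rw [hsplit (fun i => w i * ψ' i * v i), hsplit (fun i => (1/n : ℝ) * ψ i * v' i),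
      hcomp, sum_add_distrib]
    ring
  have hfinal : |∑ i, w i * ψ' i * v i| ≤ γ₁ * l1norm u + 6 * (α * (b * M)) := by
    rw [hdecomp]
    calc |_ + (_ - _ + _)| ≤ _ := abs_add_le _ _
      _ ≤ γ₁ * l1norm u + 6 * (α * (b * M)) := by
        have h5 := abs_sub (∑ i ∈ Sbad, w i * ψ' i * v i) (∑ i ∈ Sbad, (1/n : ℝ) * ψ i * v' i)
        have h6 := abs_add_le ((∑ i ∈ Sbad, w i * ψ' i * v i) - ∑ i ∈ Sbad, (1/n : ℝ) * ψ i * v' i)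
          (∑ i ∈ Sbadᶜ, (w i - 1/n) * ψ i * v' i)
        linarith
  calc |∑ i, w i * ψ' i * v i| ≤ γ₁ * l1norm u + 6 * (α * (b * M)) := hfinal
    _ = γ₁ * l1norm u + 6 * b * α * M := by ring
end

section
/- Let 0 < ε < 1/2 and suppose weights w, w' ∈ [0,1/n]ⁿ, a partition [n] = S_g ∪ S_b with |S_b| ≤ εn, and nonnegative numbers τ₁,…,τₙ satisfy: w'_i = (1 − τ_i/‖τ‖_∞)·w_i for all i, ∑_{i∈S_g} τ_i w_i ≤ a, ∑_{i=1}^n τ_i w_i > 2a, and ∑_{i∈S_g}(1/n − w_i) ≤ ∑_{i∈S_b}(1/n − w_i). Then ∑_{i∈S_g}(1/n − w'_i) < ∑_{i∈S_b}(1/n − w'_i). -/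
open Finset

/-- Filtering invariant: if the weighted score of the good samples is at most `a`, the
total weighted score exceeds `2a`, and the good samples have lost no more weight than the
bad samples, then after the multiplicative downweighting step
`w'ᵢ = (1 − τᵢ/‖τ‖_∞) wᵢ` the good samples have lost strictly less weight than the bad. -/
theorem filtering_invariant {n : ℕ} (hn : 0 < n) (ε a : ℝ) (hε : 0 < ε) (hε2 : ε < 1 / 2)
    (w w' τ : Fin n → ℝ) (hw : ∀ i, 0 ≤ w i ∧ w i ≤ 1 / n) (hτ : ∀ i, 0 ≤ τ i)
    (M : ℝ) (hM : 0 < M) (hMub : ∀ i, τ i ≤ M) (hMmem : ∃ i, τ i = M)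
    (hupd : ∀ i, w' i = (1 - τ i / M) * w i)
    (Sb : Finset (Fin n)) (hb : (Sb.card : ℝ) ≤ ε * n)
    (hgood : ∑ i ∈ Sbᶜ, τ i * w i ≤ a)
    (htotal : 2 * a < ∑ i, τ i * w i)
    (hinv : ∑ i ∈ Sbᶜ, (1 / n - w i) ≤ ∑ i ∈ Sb, (1 / n - w i)) :
    ∑ i ∈ Sbᶜ, (1 / n - w' i) < ∑ i ∈ Sb, (1 / n - w' i) := by
  have hsplit : ∑ i ∈ Sb, τ i * w i + ∑ i ∈ Sbᶜ, τ i * w i = ∑ i, τ i * w i :=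
    Finset.sum_add_sum_compl Sb _
  have hbad : a < ∑ i ∈ Sb, τ i * w i := by linarith
  have hkey : ∑ i ∈ Sbᶜ, τ i * w i < ∑ i ∈ Sb, τ i * w i := lt_of_le_of_lt hgood hbad
  have hdiff : ∀ i, 1 / (n : ℝ) - w' i = (1 / n - w i) + (1 / M) * (τ i * w i) := by
    intro i
    rw [hupd i]
    field_simp
    ring
  simp only [hdiff]
  rw [Finset.sum_add_distrib, Finset.sum_add_distrib, ← Finset.mul_sum, ← Finset.mul_sum]
  have : (1 / M) * ∑ i ∈ Sbᶜ, τ i * w i < (1 / M) * ∑ i ∈ Sb, τ i * w i := by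
    apply mul_lt_mul_of_pos_left hkey (by positivity)
  linarith
end

section
/- Consider the filtering algorithm that starts with weights w_i = 1/n, and at each step, if the current weighted score ∑_i w_i τ_i > 2a (with ∑_{i∈S_g} w_i τ_i ≤ a at every step), updates w'_i = (1 − τ_i/‖τ‖_∞) w_i, where at least one coordinate is set to zero at each step. If |S_b| ≤ εn, then the algorithm terminates after at most ⌈2εn⌉ iterations, and the final weights satisfy ∑_i w_i ≥ 1 − 2ε. -/
open Finset

/-- Termination of the filtering algorithm: starting from uniform weights `w 0 = 1/n`,
if at every step with total weighted score exceeding `2a` the weights are multiplicatively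
downweighted by `1 − τᵢ/‖τ‖_∞` (zeroing the index attaining the maximum, which had
positive weight), the good-sample score is always at most `a`, and `|S_b| ≤ εn`, then
within `⌈2εn⌉` iterations the algorithm reaches weights with score at most `2a` and total
weight at least `1 − 2ε`. -/
theorem filtering_terminates {n : ℕ} (hn : 0 < n) (ε a : ℝ) (hε : 0 < ε) (hε2 : ε < 1 / 2)
    (Sb : Finset (Fin n)) (hb : (Sb.card : ℝ) ≤ ε * n)
    (w : ℕ → Fin n → ℝ) (τ : ℕ → Fin n → ℝ)
    (h0 : ∀ i, w 0 i = 1 / n)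
    (hτ : ∀ T i, 0 ≤ τ T i)
    (hgood : ∀ T, ∑ i ∈ Sbᶜ, w T i * τ T i ≤ a)
    (hupd : ∀ T, 2 * a < ∑ i, w T i * τ T i →
      ∃ i₀ : Fin n, (∀ i, τ T i ≤ τ T i₀) ∧ 0 < τ T i₀ ∧ 0 < w T i₀ ∧
        ∀ i, w (T + 1) i = (1 - τ T i / τ T i₀) * w T i)
    (hstop : ∀ T, (∑ i, w T i * τ T i) ≤ 2 * a → ∀ i, w (T + 1) i = w T i) :
    ∃ T ≤ Nat.ceil (2 * ε * n),
      (∑ i, w T i * τ T i) ≤ 2 * a ∧ 1 - 2 * ε ≤ ∑ i, w T i := by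
  have hn' : (0:ℝ) < n := by exact_mod_cast hn
  set N := Nat.ceil (2 * ε * n) with hN
  -- weights are nonnegative and decreasing
  have hstep : ∀ T i, 0 ≤ w T i → 0 ≤ w (T+1) i ∧ w (T+1) i ≤ w T i := by
    intro T i hwi
    by_cases h : (∑ i, w T i * τ T i) ≤ 2*a
    · rw [hstop T h i]; exact ⟨hwi, le_refl _⟩
    · push_neg at h
      obtain ⟨i₀, hmax, hpos, hwpos, hu⟩ := hupd T h
      rw [hu i]
      have h1 : τ T i / τ T i₀ ≤ 1 := (div_le_one hpos).2 (hmax i)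
      have h2 : 0 ≤ τ T i / τ T i₀ := div_nonneg (hτ T i) hpos.le
      constructor
      · exact mul_nonneg (by linarith) hwi
      · nlinarith
  have hw : ∀ T i, 0 ≤ w T i := by
    intro T; induction T with
    | zero => intro i; rw [h0]; positivity
    | succ T ih => intro i; exact (hstep T i (ih i)).1
  have hdec : ∀ T i, w (T+1) i ≤ w T i := fun T i => (hstep T i (hw T i)).2
  have hub : ∀ T i, w T i ≤ 1/(n:ℝ) := by
    intro T; induction T with
    | zero => intro i; rw [h0]
    | succ T ih => intro i; exact (hdec T i).trans (ih i)
  -- per-step removal: good removal < bad removal at update steps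
  have hkey : ∀ T, 2*a < ∑ i, w T i * τ T i →
      (∑ i ∈ Sbᶜ, (w T i - w (T+1) i)) < (∑ i ∈ Sb, (w T i - w (T+1) i)) := by
    intro T h
    obtain ⟨i₀, hmax, hpos, hwpos, hu⟩ := hupd T h
    have hne : τ T i₀ ≠ 0 := hpos.ne'
    have hrw : ∀ i, w T i - w (T+1) i = (w T i * τ T i) / τ T i₀ := by
      intro i; rw [hu i]; field_simp; ring
    simp only [hrw]
    rw [← Finset.sum_div, ← Finset.sum_div]
    rw [div_lt_div_iff_of_pos_right hpos]
    have hsplit := Finset.sum_add_sum_compl Sb (fun i => w T i * τ T i)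
    have := hgood T
    linarith
  have hle : ∀ T, (∑ i ∈ Sbᶜ, (w T i - w (T+1) i)) ≤ (∑ i ∈ Sb, (w T i - w (T+1) i)) := by
    intro T
    by_cases h : (∑ i, w T i * τ T i) ≤ 2*a
    · simp [hstop T h]
    · exact (hkey T (lt_of_not_ge h)).le
  -- sum decompositions
  have e1 : ∀ T, ∑ i ∈ Sbᶜ, (1/(n:ℝ) - w (T+1) i)
      = ∑ i ∈ Sbᶜ, (1/(n:ℝ) - w T i) + ∑ i ∈ Sbᶜ, (w T i - w (T+1) i) := by
    intro T; rw [← Finset.sum_add_distrib]; apply Finset.sum_congr rfl; intros; ring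
  have e2 : ∀ T, ∑ i ∈ Sb, (1/(n:ℝ) - w (T+1) i)
      = ∑ i ∈ Sb, (1/(n:ℝ) - w T i) + ∑ i ∈ Sb, (w T i - w (T+1) i) := by
    intro T; rw [← Finset.sum_add_distrib]; apply Finset.sum_congr rfl; intros; ring
  -- cumulative invariant G ≤ B
  have hGB : ∀ T, ∑ i ∈ Sbᶜ, (1/(n:ℝ) - w T i) ≤ ∑ i ∈ Sb, (1/(n:ℝ) - w T i) := by
    intro T; induction T with
    | zero => simp [h0]
    | succ T ih =>
      have := hle T
      rw [e1 T, e2 T]; linarith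
  -- B ≤ ε
  have hBε : ∀ T, ∑ i ∈ Sb, (1/(n:ℝ) - w T i) ≤ ε := by
    intro T
    calc ∑ i ∈ Sb, (1/(n:ℝ) - w T i) ≤ ∑ _i ∈ Sb, 1/(n:ℝ) :=
          Finset.sum_le_sum (fun i _ => by linarith [hw T i])
      _ = (Sb.card : ℝ) * (1/n) := by rw [Finset.sum_const, nsmul_eq_mul]
      _ ≤ (ε * n) * (1/n) := mul_le_mul_of_nonneg_right hb (by positivity)
      _ = ε := by field_simp
  have hone : ∑ _i : Fin n, (1/(n:ℝ)) = 1 := by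
    rw [Finset.sum_const, Finset.card_univ, Fintype.card_fin, nsmul_eq_mul]; field_simp
  have hsplitT : ∀ T, ∑ i ∈ Sb, (1/(n:ℝ) - w T i) + ∑ i ∈ Sbᶜ, (1/(n:ℝ) - w T i)
      = 1 - ∑ i, w T i := by
    intro T
    rw [Finset.sum_add_sum_compl Sb (fun i => 1/(n:ℝ) - w T i), Finset.sum_sub_distrib, hone]
  -- unconditional weight bound
  have hwsum : ∀ T, 1 - 2*ε ≤ ∑ i, w T i := by
    intro T
    have := hsplitT T
    have := hGB T
    have := hBε T
    linarith
  -- contradiction setup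
  by_contra hc
  push_neg at hc
  have hall : ∀ T ≤ N, 2*a < ∑ i, w T i * τ T i := by
    intro T hT
    by_contra h
    push_neg at h
    exact absurd (hwsum T) (not_le.mpr (hc T hT h))
  -- zero counting
  have hZ : ∀ T ≤ N, T ≤ (univ.filter fun i => w T i = 0).card := by
    intro T
    induction T with
    | zero => intro _; exact Nat.zero_le _
    | succ T ih =>
      intro hT
      have hT' : T ≤ N := Nat.le_of_succ_le hT
      obtain ⟨i₀, hmax, hpos, hwpos, hu⟩ := hupd T (hall T hT')
      have hsub : (univ.filter fun i => w T i = 0) ⊆ (univ.filter fun i => w (T+1) i = 0) := by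
        intro i hi
        simp only [Finset.mem_filter, Finset.mem_univ, true_and] at *
        rw [hu i, hi, mul_zero]
      have hi₀ : i₀ ∈ (univ.filter fun i => w (T+1) i = 0) := by
        simp only [Finset.mem_filter, Finset.mem_univ, true_and]
        rw [hu i₀, div_self hpos.ne']; ring
      have hni₀ : i₀ ∉ (univ.filter fun i => w T i = 0) := by
        simp only [Finset.mem_filter, Finset.mem_univ, true_and]
        exact hwpos.ne'
      have hcardlt := Finset.card_lt_card ((Finset.ssubset_iff_of_subset hsub).2 ⟨i₀, hi₀, hni₀⟩)
      have := ih hT'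
      omega
  -- strict invariant for T ≥ 1
  have hN1 : 1 ≤ N := Nat.one_le_ceil_iff.mpr (by positivity)
  have hGBs : ∀ T, 1 ≤ T → T ≤ N →
      ∑ i ∈ Sbᶜ, (1/(n:ℝ) - w T i) < ∑ i ∈ Sb, (1/(n:ℝ) - w T i) := by
    intro T
    induction T with
    | zero => omega
    | succ T ih =>
      intro _ hT
      rcases Nat.eq_zero_or_pos T with h|h
      · subst h
        have hk := hkey 0 (hall 0 (by omega))
        have g0 : ∑ i ∈ Sbᶜ, (1/(n:ℝ) - w 0 i) = 0 := by simp [h0]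
        have b0 : ∑ i ∈ Sb, (1/(n:ℝ) - w 0 i) = 0 := by simp [h0]
        rw [e1 0, e2 0, g0, b0]; linarith
      · have h1 := ih h (by omega)
        have h2 := hle T
        rw [e1 T, e2 T]; linarith
  -- zeros contribute 1/n each to the removed mass
  have hfin := hZ N le_rfl
  set Z := (univ.filter fun i => w N i = 0) with hZdef
  have hZsum : (Z.card : ℝ) * (1/n) = ∑ i ∈ Z, (1/(n:ℝ) - w N i) := by
    rw [Finset.sum_congr rfl (fun i hi => by
      rw [(Finset.mem_filter.1 hi).2, sub_zero]), Finset.sum_const, nsmul_eq_mul]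
  have hZle : ∑ i ∈ Z, (1/(n:ℝ) - w N i) ≤ ∑ i, (1/(n:ℝ) - w N i) :=
    Finset.sum_le_sum_of_subset_of_nonneg (Finset.subset_univ Z)
      (fun i _ _ => by linarith [hub N i])
  have huniv : ∑ i, (1/(n:ℝ) - w N i)
      = ∑ i ∈ Sb, (1/(n:ℝ) - w N i) + ∑ i ∈ Sbᶜ, (1/(n:ℝ) - w N i) :=
    (Finset.sum_add_sum_compl Sb _).symm
  have hNn : (N:ℝ) * (1/n) < 2*ε := by
    have c1 : (N:ℝ) * (1/n) ≤ (Z.card : ℝ) * (1/n) := by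
      apply mul_le_mul_of_nonneg_right _ (by positivity)
      exact_mod_cast hfin
    have c2 := hGBs N hN1 le_rfl
    have c3 := hBε N
    rw [hZsum] at c1
    rw [huniv] at hZle
    linarith
  have hNlt : (N:ℝ) < 2*ε*n := by
    have := mul_lt_mul_of_pos_right hNn hn'
    rw [mul_assoc, one_div, inv_mul_cancel₀ hn'.ne', mul_one] at this
    linarith
  have := Nat.le_ceil (2*ε*n)
  rw [← hN] at this
  linarith
end

section
/- Let A_K be the elastic constraint system (s_i² = 1, s_i v_i ≥ ±v_i, ∑ v_i² ≤ 1, ∑ s_i v_i ≤ √K). For any real solution (v, s) of A_K and any polynomial p(v) = ∑_{i₁,…,i_t} p_{i₁…i_t} v_{i₁}⋯v_{i_t} of degree t, we have p(v)² ≤ ‖p‖_∞² · K^t, where ‖p‖_∞ is the maximum absolute value of a coefficient of p. -/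
open Finset

/-- For any real solution `(v, s)` of the elastic constraint system `A_K` and any degree-`t`
polynomial `p(v) = ∑_{j₁,…,j_t} p_{j₁…j_t} v_{j₁}⋯v_{j_t}` whose coefficients are bounded
in absolute value by `P`, one has `p(v)² ≤ P² · K^t`. -/
theorem elastic_constraints_bound_polynomials {d t : ℕ} (K : ℝ) (hK : 1 ≤ K)
    (v s : Fin d → ℝ)
    (hs : ∀ i, s i ^ 2 = 1) (hsv1 : ∀ i, s i * v i ≥ v i) (hsv2 : ∀ i, s i * v i ≥ -v i)
    (hv2 : ∑ i, v i ^ 2 ≤ 1) (hsv : ∑ i, s i * v i ≤ Real.sqrt K)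
    (c : (Fin t → Fin d) → ℝ) (P : ℝ) (hP : ∀ j, |c j| ≤ P) :
    (∑ j : Fin t → Fin d, c j * ∏ r, v (j r)) ^ 2 ≤ P ^ 2 * K ^ t := by
  have hK0 : (0:ℝ) ≤ K := le_trans zero_le_one hK
  set S := ∑ i, |v i| with hS
  have hS0 : 0 ≤ S := Finset.sum_nonneg fun i _ => abs_nonneg _
  have hSK : S ≤ Real.sqrt K := by
    refine le_trans (Finset.sum_le_sum fun i _ => ?_) hsv
    exact abs_le.mpr ⟨by linarith [hsv2 i], hsv1 i⟩
  -- step 1: |sum| ≤ P * S^t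
  have habs : |∑ j : Fin t → Fin d, c j * ∏ r, v (j r)| ≤ P * S ^ t := by
    calc |∑ j : Fin t → Fin d, c j * ∏ r, v (j r)|
        ≤ ∑ j : Fin t → Fin d, |c j * ∏ r, v (j r)| := Finset.abs_sum_le_sum_abs _ _
      _ ≤ ∑ j : Fin t → Fin d, P * ∏ r, |v (j r)| := by
          refine Finset.sum_le_sum fun j _ => ?_
          rw [abs_mul, abs_prod]
          exact mul_le_mul_of_nonneg_right (hP j)
            (Finset.prod_nonneg fun r _ => abs_nonneg _)
      _ = P * ∑ j : Fin t → Fin d, ∏ r, |v (j r)| := by rw [Finset.mul_sum]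
      _ = P * S ^ t := by
          congr 1
          rw [show S ^ t = ∏ _r : Fin t, S from by simp, hS,
            Finset.prod_univ_sum (fun _ : Fin t => (Finset.univ : Finset (Fin d)))
              (fun _ i => |v i|)]
          simp [Fintype.piFinset_univ]
  have h1 : (∑ j : Fin t → Fin d, c j * ∏ r, v (j r)) ^ 2 ≤ (P * S ^ t) ^ 2 := by
    rw [← sq_abs]
    exact pow_le_pow_left₀ (abs_nonneg _) habs 2
  refine h1.trans ?_
  have : (P * S ^ t) ^ 2 = P ^ 2 * (S ^ 2) ^ t := by ring
  rw [this]
  gcongr P ^ 2 * ?_ ^ t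
  nlinarith [Real.sq_sqrt hK0, Real.sqrt_nonneg K]
end
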